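/- arXiv:1711.03611 — 2 statements merged into one kernel-verified Lean document; each statement's English description precedes it below -/
import Mathlib

section
/- If additionally Y(a,z) = Y(z) for all a (no direct effect of exposure on outcome not through the mediator), then E[Y(A, Z(a*))] = E[Y(a*)], so the population intervention indirect effect PIIE(a*) = E[Y] − E[Y(A,Z(a*))] equals the population intervention effect PIE(a*) = E[Y] − E[Y(a*)], and E[Y(a*)] is given by Pearl's front-door formula Σ_{z,c} Pr(Z=z|A=a*,C=c) Σ_a E[Y|A=a,Z=z,C=c] Pr(A=a|C=c) Pr(C=c). -/
open Finset
open scoped Classical BigOperators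

noncomputable section

namespace FrontDoor

/-- Probability of an event under pmf `p` on a finite sample space. -/
def pr {Ω : Type*} [Fintype Ω] (p : Ω → ℝ) (E : Ω → Prop) : ℝ :=
  ∑ ω, if E ω then p ω else 0

/-- Expectation of `X` under pmf `p`. -/
def ex {Ω : Type*} [Fintype Ω] (p : Ω → ℝ) (X : Ω → ℝ) : ℝ :=
  ∑ ω, p ω * X ω

/-- Conditional expectation `E[X | E]`. -/
def cex {Ω : Type*} [Fintype Ω] (p : Ω → ℝ) (X : Ω → ℝ) (E : Ω → Prop) : ℝ :=
  (∑ ω, if E ω then p ω * X ω else 0) / pr p E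

/-- Conditional probability `Pr(E | F)`. -/
def cpr {Ω : Type*} [Fintype Ω] (p : Ω → ℝ) (E F : Ω → Prop) : ℝ :=
  pr p (fun ω => E ω ∧ F ω) / pr p F

end FrontDoor

open FrontDoor

/-!
Split `E[Y(a*, Z(a*))]` over the cells `Z(a*) = z, A = a, C = c`. By full mediation
`Y(a*, z) = Y(a, z)` on such a cell, and M3 (with `a' = a*`) factors its contribution as
`E[Y(a,z) | A=a, C=c] · Pr(Z(a*)=z, A=a, C=c)`. M3 with `a' = a` and consistency identify the first
factor with `E[Y | A=a, Z=z, C=c]`; M2 factors the second as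
`Pr(Z(a*)=z | C=c) Pr(A=a | C=c) Pr(C=c)`, and M2 with `a = a*` together with consistency turns
`Pr(Z(a*)=z | C=c)` into `Pr(Z=z | A=a*, C=c)`. Summing the cells gives the front-door formula.
-/

namespace FrontDoor

section Probability

variable {Ω : Type*} [Fintype Ω] {p : Ω → ℝ} {E E' F G : Ω → Prop} {X X' : Ω → ℝ}

/-- The partial expectation `E[X; E]`. -/
def exOn (p : Ω → ℝ) (X : Ω → ℝ) (E : Ω → Prop) : ℝ :=
  ∑ ω, if E ω then p ω * X ω else 0

theorem cex_eq_exOn_div : cex p X E = exOn p X E / pr p E := rfl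

theorem pr_congr_ae (h : ∀ ω, p ω ≠ 0 → (E ω ↔ F ω)) : pr p E = pr p F := by
  refine Finset.sum_congr rfl fun ω _ => ?_
  by_cases hp : p ω = 0
  · simp [hp]
  · simp only [h ω hp]

theorem exOn_congr_ae (h : ∀ ω, p ω ≠ 0 → (E ω ↔ F ω))
    (hX : ∀ ω, p ω ≠ 0 → E ω → X ω = X' ω) : exOn p X E = exOn p X' F := by
  refine Finset.sum_congr rfl fun ω _ => ?_
  by_cases hp : p ω = 0
  · simp [hp]
  · by_cases hE : E ω
    · rw [if_pos hE, if_pos ((h ω hp).1 hE), hX ω hp hE]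
    · rw [if_neg hE, if_neg (mt (h ω hp).2 hE)]

theorem cex_congr_ae (h : ∀ ω, p ω ≠ 0 → (E ω ↔ F ω))
    (hX : ∀ ω, p ω ≠ 0 → E ω → X ω = X' ω) : cex p X E = cex p X' F := by
  rw [cex_eq_exOn_div, cex_eq_exOn_div, exOn_congr_ae h hX, pr_congr_ae h]

theorem cpr_congr_ae (h : ∀ ω, p ω ≠ 0 → F ω → (E ω ↔ E' ω)) : cpr p E F = cpr p E' F := by
  unfold cpr
  rw [pr_congr_ae fun ω hp => and_congr_left (h ω hp)]

theorem pr_mono (hp : ∀ ω, 0 ≤ p ω) (h : ∀ ω, E ω → F ω) : pr p E ≤ pr p F :=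
  Finset.sum_le_sum fun ω _ => by
    by_cases hE : E ω
    · simp [hE, h ω hE]
    · split_ifs <;> simp [hp ω]

theorem pr_and_eq_cpr_mul (hF : pr p F ≠ 0) :
    pr p (fun ω => E ω ∧ F ω) = cpr p E F * pr p F :=
  (div_mul_cancel₀ _ hF).symm

theorem cpr_and_right (hF : pr p F ≠ 0) :
    cpr p E (fun ω => G ω ∧ F ω) = cpr p (fun ω => E ω ∧ G ω) F / cpr p G F := by
  simp only [cpr, and_assoc]
  rw [div_div_div_cancel_right₀ hF]

theorem cpr_and_right_of_condIndep (hF : pr p F ≠ 0) (hG : cpr p G F ≠ 0)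
    (h : cpr p (fun ω => E ω ∧ G ω) F = cpr p E F * cpr p G F) :
    cpr p E (fun ω => G ω ∧ F ω) = cpr p E F := by
  rw [cpr_and_right hF, h, mul_div_cancel_right₀ _ hG]

theorem exOn_eq_sum_mul_pr (p : Ω → ℝ) (X : Ω → ℝ) (E : Ω → Prop) :
    exOn p X E = ∑ y ∈ univ.image X, y * pr p (fun ω => X ω = y ∧ E ω) := by
  rw [exOn, ← Finset.sum_fiberwise_of_maps_to (g := X) (t := univ.image X)
    fun ω _ => Finset.mem_image_of_mem X (Finset.mem_univ ω)]
  refine Finset.sum_congr rfl fun y _ => ?_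
  simp only [pr, Finset.mul_sum, Finset.sum_filter, ite_and, mul_ite, mul_zero]
  refine Finset.sum_congr rfl fun ω _ => ?_
  split_ifs with hX <;> simp [hX, mul_comm]

theorem cex_eq_sum_mul_cpr (p : Ω → ℝ) (X : Ω → ℝ) (F : Ω → Prop) :
    cex p X F = ∑ y ∈ univ.image X, y * cpr p (fun ω => X ω = y) F := by
  simp only [cex_eq_exOn_div, exOn_eq_sum_mul_pr, Finset.sum_div, cpr, mul_div_assoc]

theorem exOn_and_of_condIndep (hF : pr p F ≠ 0)
    (h : ∀ y, cpr p (fun ω => X ω = y ∧ E ω) F = cpr p (fun ω => X ω = y) F * cpr p E F) :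
    exOn p X (fun ω => E ω ∧ F ω) = cex p X F * pr p (fun ω => E ω ∧ F ω) := by
  have hy : ∀ y, pr p (fun ω => X ω = y ∧ E ω ∧ F ω)
      = cpr p (fun ω => X ω = y) F * (cpr p E F * pr p F) := fun y => by
    simp only [← and_assoc]
    rw [pr_and_eq_cpr_mul hF, h, mul_assoc]
  simp only [exOn_eq_sum_mul_pr, hy, cex_eq_sum_mul_cpr, Finset.sum_mul, pr_and_eq_cpr_mul hF,
    mul_assoc]

theorem cex_and_of_condIndep (hF : pr p F ≠ 0) (hEF : pr p (fun ω => E ω ∧ F ω) ≠ 0)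
    (h : ∀ y, cpr p (fun ω => X ω = y ∧ E ω) F = cpr p (fun ω => X ω = y) F * cpr p E F) :
    cex p X (fun ω => E ω ∧ F ω) = cex p X F := by
  rw [cex_eq_exOn_div, exOn_and_of_condIndep hF h, mul_div_cancel_right₀ _ hEF]

theorem ex_eq_sum_exOn_fiber {β : Type*} [Fintype β] (f : Ω → β) :
    ex p X = ∑ b, exOn p X (fun ω => f ω = b) := by
  simp only [ex, exOn]
  rw [Finset.sum_comm]
  simp

end Probability

section Model

variable {Ω α ζ γ : Type*} {p : Ω → ℝ} {A : Ω → α} {Z : Ω → ζ} {Y : Ω → ℝ}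
  {C : Ω → γ} {Zc : α → Ω → ζ} {Yc : α → ζ → Ω → ℝ} {a astar : α} {z : ζ} {c : γ}

theorem counterfactual_eq_iff (hconsZ : ∀ ω, p ω ≠ 0 → Zc (A ω) ω = Z ω) {ω : Ω}
    (hp : p ω ≠ 0) (ha : A ω = a) : Zc a ω = z ↔ Z ω = z := by
  rw [← ha, hconsZ ω hp]

variable [Fintype Ω]

theorem cpr_counterfactual_eq (hconsZ : ∀ ω, p ω ≠ 0 → Zc (A ω) ω = Z ω)
    (hM2 : ∀ (a' : α) (z : ζ) (a : α) (c : γ),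
      cpr p (fun ω => Zc a' ω = z ∧ A ω = a) (fun ω => C ω = c)
        = cpr p (fun ω => Zc a' ω = z) (fun ω => C ω = c)
          * cpr p (fun ω => A ω = a) (fun ω => C ω = c))
    (hC : pr p (fun ω => C ω = c) ≠ 0) (hAC : cpr p (fun ω => A ω = a) (fun ω => C ω = c) ≠ 0) :
    cpr p (fun ω => Zc a ω = z) (fun ω => C ω = c)
      = cpr p (fun ω => Z ω = z) (fun ω => A ω = a ∧ C ω = c) := by
  rw [← cpr_and_right_of_condIndep hC hAC (hM2 a z a c)]
  exact cpr_congr_ae fun ω hp h => counterfactual_eq_iff hconsZ hp h.1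

theorem cex_counterfactual_eq (hconsZ : ∀ ω, p ω ≠ 0 → Zc (A ω) ω = Z ω)
    (hconsY : ∀ ω, p ω ≠ 0 → Yc (A ω) (Z ω) ω = Y ω)
    (hM3 : ∀ (a a' : α) (z z' : ζ) (c : γ) (y : ℝ),
      cpr p (fun ω => Yc a z ω = y ∧ Zc a' ω = z') (fun ω => A ω = a ∧ C ω = c)
        = cpr p (fun ω => Yc a z ω = y) (fun ω => A ω = a ∧ C ω = c)
          * cpr p (fun ω => Zc a' ω = z') (fun ω => A ω = a ∧ C ω = c))
    (hAC : pr p (fun ω => A ω = a ∧ C ω = c) ≠ 0)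
    (hAZC : pr p (fun ω => A ω = a ∧ Z ω = z ∧ C ω = c) ≠ 0) :
    cex p (Yc a z) (fun ω => A ω = a ∧ C ω = c)
      = cex p Y (fun ω => A ω = a ∧ Z ω = z ∧ C ω = c) := by
  have hiff : ∀ ω, p ω ≠ 0 →
      ((Zc a ω = z ∧ A ω = a ∧ C ω = c) ↔ (A ω = a ∧ Z ω = z ∧ C ω = c)) :=
    fun ω hp => ⟨fun ⟨hz, ha, hc⟩ => ⟨ha, (counterfactual_eq_iff hconsZ hp ha).1 hz, hc⟩,
      fun ⟨ha, hz, hc⟩ => ⟨(counterfactual_eq_iff hconsZ hp ha).2 hz, ha, hc⟩⟩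
  rw [← cex_and_of_condIndep hAC (pr_congr_ae hiff ▸ hAZC) (hM3 a a z z c)]
  refine cex_congr_ae hiff fun ω hp h => ?_
  obtain ⟨ha, hz, -⟩ := (hiff ω hp).1 h
  rw [← ha, ← hz, hconsY ω hp]

theorem exOn_counterfactual_eq_frontdoor_term (hp0 : ∀ ω, 0 ≤ p ω)
    (hconsZ : ∀ ω, p ω ≠ 0 → Zc (A ω) ω = Z ω)
    (hconsY : ∀ ω, p ω ≠ 0 → Yc (A ω) (Z ω) ω = Y ω)
    (hM2 : ∀ (a' : α) (z : ζ) (a : α) (c : γ),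
      cpr p (fun ω => Zc a' ω = z ∧ A ω = a) (fun ω => C ω = c)
        = cpr p (fun ω => Zc a' ω = z) (fun ω => C ω = c)
          * cpr p (fun ω => A ω = a) (fun ω => C ω = c))
    (hM3 : ∀ (a a' : α) (z z' : ζ) (c : γ) (y : ℝ),
      cpr p (fun ω => Yc a z ω = y ∧ Zc a' ω = z') (fun ω => A ω = a ∧ C ω = c)
        = cpr p (fun ω => Yc a z ω = y) (fun ω => A ω = a ∧ C ω = c)
          * cpr p (fun ω => Zc a' ω = z') (fun ω => A ω = a ∧ C ω = c))
    (hpos : 0 < pr p (fun ω => A ω = a ∧ Z ω = z ∧ C ω = c))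
    (hpos' : 0 < pr p (fun ω => A ω = astar ∧ Z ω = z ∧ C ω = c)) :
    exOn p (Yc a z) (fun ω => Zc astar ω = z ∧ A ω = a ∧ C ω = c)
      = cpr p (fun ω => Z ω = z) (fun ω => A ω = astar ∧ C ω = c)
        * (cex p Y (fun ω => A ω = a ∧ Z ω = z ∧ C ω = c)
          * cpr p (fun ω => A ω = a) (fun ω => C ω = c) * pr p (fun ω => C ω = c)) := by
  have hAC : pr p (fun ω => A ω = a ∧ C ω = c) ≠ 0 :=
    (hpos.trans_le (pr_mono hp0 fun ω h => ⟨h.1, h.2.2⟩)).ne'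
  have hC : pr p (fun ω => C ω = c) ≠ 0 :=
    (hpos.trans_le (pr_mono hp0 fun ω h => h.2.2)).ne'
  have hA'C : cpr p (fun ω => A ω = astar) (fun ω => C ω = c) ≠ 0 :=
    div_ne_zero (hpos'.trans_le (pr_mono hp0 fun ω h => ⟨h.1, h.2.2⟩)).ne' hC
  have hZAC : pr p (fun ω => Zc astar ω = z ∧ A ω = a ∧ C ω = c)
      = cpr p (fun ω => Zc astar ω = z) (fun ω => C ω = c)
        * cpr p (fun ω => A ω = a) (fun ω => C ω = c) * pr p (fun ω => C ω = c) := by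
    simp only [← and_assoc]
    rw [pr_and_eq_cpr_mul hC, hM2]
  rw [exOn_and_of_condIndep hAC (hM3 a astar z z c), hZAC,
    cex_counterfactual_eq hconsZ hconsY hM3 hAC hpos.ne', cpr_counterfactual_eq hconsZ hM2 hC hA'C]
  ring

theorem ex_counterfactual_eq_sum_exOn [Fintype α] [Fintype ζ] [Fintype γ]
    (hF1 : ∀ (a a' : α) (z : ζ) (ω : Ω), Yc a z ω = Yc a' z ω) :
    ex p (fun ω => Yc astar (Zc astar ω) ω)
      = ∑ z, ∑ c, ∑ a, exOn p (Yc a z) (fun ω => Zc astar ω = z ∧ A ω = a ∧ C ω = c) := by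
  rw [ex_eq_sum_exOn_fiber fun ω => (Zc astar ω, C ω, A ω)]
  simp only [Fintype.sum_prod_type]
  refine Finset.sum_congr rfl fun z _ => Finset.sum_congr rfl fun c _ =>
    Finset.sum_congr rfl fun a _ => exOn_congr_ae (fun ω _ => ?_) fun ω _ h => ?_
  · simp only [Prod.mk.injEq]
    tauto
  · simp only [Prod.mk.injEq] at h
    obtain ⟨hz, -, ha⟩ := h
    rw [hz, hF1 astar a]

end Model

end FrontDoor

theorem piie_equals_pie_under_frontdoor_general
    {Ω α ζ γ : Type*} [Fintype Ω] [Fintype α] [Fintype ζ] [Fintype γ]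
    (p : Ω → ℝ) (hp0 : ∀ ω, 0 ≤ p ω)
    (A : Ω → α) (Z : Ω → ζ) (Y : Ω → ℝ) (C : Ω → γ)
    (Zc : α → Ω → ζ) (Yc : α → ζ → Ω → ℝ) (astar : α)
    -- M1: consistency (almost surely)
    (hconsZ : ∀ ω, p ω ≠ 0 → Zc (A ω) ω = Z ω)
    (hconsY : ∀ ω, p ω ≠ 0 → Yc (A ω) (Z ω) ω = Y ω)
    -- M2: Z(a') ⊥ A | C
    (hM2 : ∀ (a' : α) (z : ζ) (a : α) (c : γ),
      cpr p (fun ω => Zc a' ω = z ∧ A ω = a) (fun ω => C ω = c)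
        = cpr p (fun ω => Zc a' ω = z) (fun ω => C ω = c)
          * cpr p (fun ω => A ω = a) (fun ω => C ω = c))
    -- M3: Y(a,z) ⊥ Z(a') | A = a, C = c
    (hM3 : ∀ (a a' : α) (z z' : ζ) (c : γ) (y : ℝ),
      cpr p (fun ω => Yc a z ω = y ∧ Zc a' ω = z') (fun ω => A ω = a ∧ C ω = c)
        = cpr p (fun ω => Yc a z ω = y) (fun ω => A ω = a ∧ C ω = c)
          * cpr p (fun ω => Zc a' ω = z') (fun ω => A ω = a ∧ C ω = c))
    -- positivity (P1 and P2)
    (hposZAC : ∀ (a : α) (z : ζ) (c : γ),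
      0 < pr p (fun ω => A ω = a ∧ Z ω = z ∧ C ω = c))
    -- F1: full mediation, no direct effect of A on Y
    (hF1 : ∀ (a a' : α) (z : ζ) (ω : Ω), Yc a z ω = Yc a' z ω) :
    ex p (fun ω => Yc (A ω) (Zc astar ω) ω)
        = ex p (fun ω => Yc astar (Zc astar ω) ω)
      ∧ ex p (fun ω => Yc astar (Zc astar ω) ω)
          = ∑ z : ζ, ∑ c : γ,
              cpr p (fun ω => Z ω = z) (fun ω => A ω = astar ∧ C ω = c)
                * ∑ a : α,
                    cex p Y (fun ω => A ω = a ∧ Z ω = z ∧ C ω = c)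
                      * cpr p (fun ω => A ω = a) (fun ω => C ω = c)
                      * pr p (fun ω => C ω = c)
      ∧ ex p Y - ex p (fun ω => Yc (A ω) (Zc astar ω) ω)
          = ex p Y - ex p (fun ω => Yc astar (Zc astar ω) ω) := by
  have hcf : ex p (fun ω => Yc (A ω) (Zc astar ω) ω) = ex p (fun ω => Yc astar (Zc astar ω) ω) :=
    congrArg (ex p) (funext fun ω => hF1 (A ω) astar (Zc astar ω) ω)
  refine ⟨hcf, ?_, by rw [hcf]⟩
  rw [ex_counterfactual_eq_sum_exOn (A := A) (C := C) hF1]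
  refine Finset.sum_congr rfl fun z _ => Finset.sum_congr rfl fun c _ => ?_
  rw [Finset.mul_sum]
  exact Finset.sum_congr rfl fun a _ => exOn_counterfactual_eq_frontdoor_term hp0 hconsZ hconsY
    hM2 hM3 (hposZAC a z c) (hposZAC astar z c)

/-- Under M1-M3, positivity, and full mediation F1
(`Y(a,z) = Y(a',z)` for all `a, a', z`), we have `E[Y(A,Z(a*))] = E[Y(a*)]`,
`E[Y(a*)]` is given by Pearl's front-door formula, and hence
`PIIE(a*) = E[Y] - E[Y(A,Z(a*))]` equals `PIE(a*) = E[Y] - E[Y(a*)]`. -/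
theorem piie_equals_pie_under_frontdoor
    {Ω α ζ γ : Type*} [Fintype Ω] [Fintype α] [Fintype ζ] [Fintype γ]
    (p : Ω → ℝ) (hp0 : ∀ ω, 0 ≤ p ω) (hp1 : ∑ ω, p ω = 1)
    (A : Ω → α) (Z : Ω → ζ) (Y : Ω → ℝ) (C : Ω → γ)
    (Zc : α → Ω → ζ) (Yc : α → ζ → Ω → ℝ) (astar : α)
    -- M1: consistency (almost surely)
    (hconsZ : ∀ ω, p ω ≠ 0 → Zc (A ω) ω = Z ω)
    (hconsY : ∀ ω, p ω ≠ 0 → Yc (A ω) (Z ω) ω = Y ω)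
    -- M2: Z(a') ⊥ A | C
    (hM2 : ∀ (a' : α) (z : ζ) (a : α) (c : γ),
      cpr p (fun ω => Zc a' ω = z ∧ A ω = a) (fun ω => C ω = c)
        = cpr p (fun ω => Zc a' ω = z) (fun ω => C ω = c)
          * cpr p (fun ω => A ω = a) (fun ω => C ω = c))
    -- M3: Y(a,z) ⊥ Z(a') | A = a, C = c
    (hM3 : ∀ (a a' : α) (z z' : ζ) (c : γ) (y : ℝ),
      cpr p (fun ω => Yc a z ω = y ∧ Zc a' ω = z') (fun ω => A ω = a ∧ C ω = c)
        = cpr p (fun ω => Yc a z ω = y) (fun ω => A ω = a ∧ C ω = c)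
          * cpr p (fun ω => Zc a' ω = z') (fun ω => A ω = a ∧ C ω = c))
    -- positivity (P1 and P2)
    (hposAC : ∀ (a : α) (c : γ), 0 < pr p (fun ω => A ω = a ∧ C ω = c))
    (hposZAC : ∀ (a : α) (z : ζ) (c : γ),
      0 < pr p (fun ω => A ω = a ∧ Z ω = z ∧ C ω = c))
    -- F1: full mediation, no direct effect of A on Y
    (hF1 : ∀ (a a' : α) (z : ζ) (ω : Ω), Yc a z ω = Yc a' z ω) :
    ex p (fun ω => Yc (A ω) (Zc astar ω) ω)
        = ex p (fun ω => Yc astar (Zc astar ω) ω)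
      ∧ ex p (fun ω => Yc astar (Zc astar ω) ω)
          = ∑ z : ζ, ∑ c : γ,
              cpr p (fun ω => Z ω = z) (fun ω => A ω = astar ∧ C ω = c)
                * ∑ a : α,
                    cex p Y (fun ω => A ω = a ∧ Z ω = z ∧ C ω = c)
                      * cpr p (fun ω => A ω = a) (fun ω => C ω = c)
                      * pr p (fun ω => C ω = c)
      ∧ ex p Y - ex p (fun ω => Yc (A ω) (Zc astar ω) ω)
          = ex p Y - ex p (fun ω => Yc astar (Zc astar ω) ω) :=
  piie_equals_pie_under_frontdoor_general p hp0 A Z Y C Zc Yc astar hconsZ hconsY hM2 hM3 hposZAC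
    hF1
end
end

section
/- The doubly robust front-door estimating functional has mean Ψ when the outcome mean model and exposure model are both correct, regardless of the mediator density model: if h(z|a,c) is an arbitrary positive conditional probability mass function for Z, and one substitutes the true outcome mean E[Y|A=a,Z=z,C=c] and true exposure density f(a|c), then E[ (Y − E[Y|A,Z,C])·h(Z|a*,C)/h(Z|A,C) + (I(A=a*)/f(a*|C))·(Σ_a E[Y|a,Z,C] f(a|C) − Σ_{a,z̄} E[Y|a,z̄,C] h(z̄|A,C) f(a|C)) + Σ_z E[Y|A,z,C] h(z|a*,C) ] = Ψ. -/
open Finset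
open scoped Classical BigOperators

noncomputable section

open FrontDoor

section Aux
set_option linter.unusedSectionVars false
variable {Ω : Type*} [Fintype Ω]

lemma pr_congr' (p : Ω → ℝ) {E F : Ω → Prop} (h : ∀ ω, E ω ↔ F ω) : pr p E = pr p F :=
  Finset.sum_congr rfl fun ω _ => by simp only [h ω]

lemma pr_mono' (p : Ω → ℝ) (hp0 : ∀ ω, 0 ≤ p ω) {E F : Ω → Prop} (h : ∀ ω, E ω → F ω) :
    pr p E ≤ pr p F := by
  refine Finset.sum_le_sum fun ω _ => ?_
  by_cases hE : E ω
  · simp [hE, h ω hE]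
  · by_cases hF : F ω <;> simp [hE, hF, hp0 ω]

variable {α ζ γ : Type*} [Fintype α] [Fintype ζ] [Fintype γ]

lemma sum_group (A : Ω → α) (Z : Ω → ζ) (C : Ω → γ) (W : Ω → ℝ) (G : α → ζ → γ → ℝ) :
    ∑ ω, W ω * G (A ω) (Z ω) (C ω)
      = ∑ c, ∑ z, ∑ a, (∑ ω, if A ω = a ∧ Z ω = z ∧ C ω = c then W ω else 0) * G a z c := by
  have key : ∀ ω, W ω * G (A ω) (Z ω) (C ω)
      = ∑ c, ∑ z, ∑ a, (if A ω = a ∧ Z ω = z ∧ C ω = c then W ω * G a z c else 0) := by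
    intro ω
    simp [ite_and, Finset.sum_ite_eq]
  rw [show (∑ ω, W ω * G (A ω) (Z ω) (C ω))
      = ∑ ω, ∑ c, ∑ z, ∑ a, (if A ω = a ∧ Z ω = z ∧ C ω = c then W ω * G a z c else 0)
    from Finset.sum_congr rfl fun ω _ => key ω, Finset.sum_comm]
  refine Finset.sum_congr rfl fun c _ => ?_
  rw [Finset.sum_comm]
  refine Finset.sum_congr rfl fun z _ => ?_
  rw [Finset.sum_comm]
  refine Finset.sum_congr rfl fun a _ => ?_
  rw [Finset.sum_mul]
  exact Finset.sum_congr rfl fun ω _ => by rw [ite_mul, zero_mul]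

lemma pr_marg (p : Ω → ℝ) (A : Ω → α) (Z : Ω → ζ) (C : Ω → γ) (a : α) (c : γ) :
    ∑ z, pr p (fun ω => A ω = a ∧ Z ω = z ∧ C ω = c) = pr p (fun ω => A ω = a ∧ C ω = c) := by
  unfold pr
  rw [Finset.sum_comm]
  refine Finset.sum_congr rfl fun ω _ => ?_
  by_cases h1 : A ω = a ∧ C ω = c
  · simp [h1.1, h1.2, Finset.sum_ite_eq]
  · have : ∀ z, ¬(A ω = a ∧ Z ω = z ∧ C ω = c) := fun z hz => h1 ⟨hz.1, hz.2.2⟩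
    simp [this, h1]

lemma alg (m P3 : α → ζ → γ → ℝ) (P2 : α → γ → ℝ) (Pc : γ → ℝ) (h : ζ → α → γ → ℝ)
    (astar : α) (hP2 : ∀ a c, P2 a c ≠ 0) (hPc : ∀ c, Pc c ≠ 0)
    (hmarg : ∀ a c, ∑ z, P3 a z c = P2 a c) :
    ((∑ c, ∑ z, ∑ a, m a z c * P3 a z c * (h z astar c / h z a c))
      + ∑ c, ∑ z, ∑ a, P3 a z c *
          (-(m a z c) * (h z astar c / h z a c)
            + (if a = astar then (1:ℝ) else 0) / (P2 astar c / Pc c) *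
              ((∑ a', m a' z c * (P2 a' c / Pc c))
                - ∑ a', ∑ zb, m a' zb c * h zb a c * (P2 a' c / Pc c))
            + ∑ z', m a z' c * h z' astar c))
      = ∑ z, ∑ c, (P3 astar z c / P2 astar c)
          * ∑ a, m a z c * (P2 a c / Pc c) * Pc c := by
  rw [show (∑ z, ∑ c, (P3 astar z c / P2 astar c) * ∑ a, m a z c * (P2 a c / Pc c) * Pc c)
      = ∑ c, ∑ z, (P3 astar z c / P2 astar c) * ∑ a, m a z c * (P2 a c / Pc c) * Pc c
    from Finset.sum_comm]
  rw [← Finset.sum_add_distrib]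
  refine Finset.sum_congr rfl fun c _ => ?_
  rw [← Finset.sum_add_distrib]
  set S1 : ζ → ℝ := fun z => ∑ a', m a' z c * (P2 a' c / Pc c) with hS1
  set S2 : α → ℝ := fun a => ∑ a', ∑ zb, m a' zb c * h zb a c * (P2 a' c / Pc c) with hS2
  set T3 : α → ℝ := fun a => ∑ z', m a z' c * h z' astar c with hT3
  set K : ℝ := Pc c / P2 astar c with hK
  have e0 : ∀ z a,
      (m a z c * P3 a z c * (h z astar c / h z a c)
        + P3 a z c *
          (-(m a z c) * (h z astar c / h z a c)
            + (if a = astar then (1:ℝ) else 0) / (P2 astar c / Pc c) * (S1 z - S2 a)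
            + T3 a))
      = (if a = astar then P3 a z c * ((S1 z - S2 a) * K) else 0) + P3 a z c * T3 a := by
    intro z a
    by_cases ha : a = astar
    · subst ha
      rw [if_pos rfl, if_pos rfl, one_div_div]
      ring
    · rw [if_neg ha, if_neg ha]
      simp only [zero_div, zero_mul]
      ring
  have step1 : ∀ z, (∑ a, (m a z c * P3 a z c * (h z astar c / h z a c)
        + P3 a z c *
          (-(m a z c) * (h z astar c / h z a c)
            + (if a = astar then (1:ℝ) else 0) / (P2 astar c / Pc c) * (S1 z - S2 a)
            + T3 a)))
      = P3 astar z c * ((S1 z - S2 astar) * K) + ∑ a, P3 a z c * T3 a := by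
    intro z
    rw [Finset.sum_congr rfl fun a _ => e0 z a, Finset.sum_add_distrib,
      Finset.sum_ite_eq' univ astar]
    simp
  calc ∑ z, (∑ a, m a z c * P3 a z c * (h z astar c / h z a c)
        + ∑ a, P3 a z c *
          (-(m a z c) * (h z astar c / h z a c)
            + (if a = astar then (1:ℝ) else 0) / (P2 astar c / Pc c) * (S1 z - S2 a)
            + T3 a))
      = ∑ z, (P3 astar z c * ((S1 z - S2 astar) * K) + ∑ a, P3 a z c * T3 a) := by
        refine Finset.sum_congr rfl fun z _ => ?_
        rw [← Finset.sum_add_distrib]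
        exact step1 z
    _ = (∑ z, P3 astar z c * ((S1 z - S2 astar) * K)) + ∑ z, ∑ a, P3 a z c * T3 a :=
        Finset.sum_add_distrib
    _ = ((∑ z, P3 astar z c * (S1 z * K)) - P2 astar c * (S2 astar * K))
          + ∑ a, P2 a c * T3 a := by
        congr 1
        · rw [show (∑ z, P3 astar z c * ((S1 z - S2 astar) * K))
              = ∑ z, (P3 astar z c * (S1 z * K) - P3 astar z c * (S2 astar * K))
            from Finset.sum_congr rfl fun z _ => by ring,
            Finset.sum_sub_distrib, ← Finset.sum_mul, hmarg]
        · rw [Finset.sum_comm]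
          refine Finset.sum_congr rfl fun a _ => ?_
          rw [← Finset.sum_mul, hmarg]
    _ = ∑ z, (P3 astar z c / P2 astar c) * ∑ a, m a z c * (P2 a c / Pc c) * Pc c := by
        have cancel : P2 astar c * (S2 astar * K) = ∑ a, P2 a c * T3 a := by
          have h1 : P2 astar c * (S2 astar * K) = S2 astar * (K * P2 astar c) := by ring
          rw [h1, hK, div_mul_cancel₀ _ (hP2 astar c)]
          simp only [hS2, hT3, Finset.sum_mul, Finset.mul_sum]
          refine Finset.sum_congr rfl fun a _ => Finset.sum_congr rfl fun z _ => ?_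
          rw [mul_assoc, div_mul_cancel₀ _ (hPc c)]
          ring
        rw [cancel, sub_add_cancel]
        refine Finset.sum_congr rfl fun z _ => ?_
        rw [← Finset.sum_mul, hK]
        ring

end Aux

/-- The doubly robust front-door estimating functional has mean `Ψ`
when the outcome mean model and the exposure model are both correct (set at the
truth), regardless of the working mediator density `h`. -/
theorem dr_frontdoor_outcome_exposure_correct
    {Ω α ζ γ : Type*} [Fintype Ω] [Fintype α] [Fintype ζ] [Fintype γ]
    (p : Ω → ℝ) (hp0 : ∀ ω, 0 ≤ p ω) (hp1 : ∑ ω, p ω = 1)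
    (A : Ω → α) (Z : Ω → ζ) (Y : Ω → ℝ) (C : Ω → γ) (astar : α)
    -- arbitrary working mediator density h(z|a,c), positive and summing to one
    (h : ζ → α → γ → ℝ) (hh : ∀ z a c, 0 < h z a c) (hh1 : ∀ a c, ∑ z : ζ, h z a c = 1)
    -- positivity of the true densities
    (hposAC : ∀ (a : α) (c : γ), 0 < pr p (fun ω => A ω = a ∧ C ω = c))
    (hposZAC : ∀ (a : α) (z : ζ) (c : γ),
      0 < pr p (fun ω => A ω = a ∧ Z ω = z ∧ C ω = c)) :
    ex p (fun ω =>
        (Y ω - cex p Y (fun ω' => A ω' = A ω ∧ Z ω' = Z ω ∧ C ω' = C ω))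
            * h (Z ω) astar (C ω) / h (Z ω) (A ω) (C ω)
        + (if A ω = astar then (1 : ℝ) else 0)
            / cpr p (fun ω' => A ω' = astar) (fun ω' => C ω' = C ω)
            * ((∑ a : α,
                  cex p Y (fun ω' => A ω' = a ∧ Z ω' = Z ω ∧ C ω' = C ω)
                    * cpr p (fun ω' => A ω' = a) (fun ω' => C ω' = C ω))
               - ∑ a : α, ∑ zb : ζ,
                   cex p Y (fun ω' => A ω' = a ∧ Z ω' = zb ∧ C ω' = C ω)
                     * h zb (A ω) (C ω)
                     * cpr p (fun ω' => A ω' = a) (fun ω' => C ω' = C ω))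
        + ∑ z : ζ,
            cex p Y (fun ω' => A ω' = A ω ∧ Z ω' = z ∧ C ω' = C ω)
              * h z astar (C ω))
      = ∑ z : ζ, ∑ c : γ,
          cpr p (fun ω => Z ω = z) (fun ω => A ω = astar ∧ C ω = c)
            * ∑ a : α,
                cex p Y (fun ω => A ω = a ∧ Z ω = z ∧ C ω = c)
                  * cpr p (fun ω => A ω = a) (fun ω => C ω = c)
                  * pr p (fun ω => C ω = c) := by
  classical
  have hP2 : ∀ (a : α) (c : γ), pr p (fun ω => A ω = a ∧ C ω = c) ≠ 0 :=
    fun a c => (hposAC a c).ne'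
  have hPc : ∀ c : γ, pr p (fun ω => C ω = c) ≠ 0 := fun c =>
    (lt_of_lt_of_le (hposAC astar c) (pr_mono' p hp0 fun ω hw => hw.2)).ne'
  have hprZ : ∀ (z : ζ) (c : γ), pr p (fun ω => Z ω = z ∧ (A ω = astar ∧ C ω = c))
      = pr p (fun ω => A ω = astar ∧ Z ω = z ∧ C ω = c) := fun z c =>
    pr_congr' p (fun ω => by tauto)
  have hSY : ∀ (a : α) (z : ζ) (c : γ),
      (∑ ω, if A ω = a ∧ Z ω = z ∧ C ω = c then p ω * Y ω else 0)
        = cex p Y (fun ω => A ω = a ∧ Z ω = z ∧ C ω = c)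
            * pr p (fun ω => A ω = a ∧ Z ω = z ∧ C ω = c) := fun a z c => by
    unfold cex
    rw [div_mul_cancel₀ _ (hposZAC a z c).ne']
    exact Finset.sum_congr rfl fun ω _ => by congr
  have hpr : ∀ (a : α) (z : ζ) (c : γ),
      (∑ ω, if A ω = a ∧ Z ω = z ∧ C ω = c then p ω else 0)
        = pr p (fun ω => A ω = a ∧ Z ω = z ∧ C ω = c) := fun a z c => by
    unfold pr
    exact Finset.sum_congr rfl fun ω _ => by congr
  have split : ex p (fun ω =>
        (Y ω - cex p Y (fun ω' => A ω' = A ω ∧ Z ω' = Z ω ∧ C ω' = C ω))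
            * h (Z ω) astar (C ω) / h (Z ω) (A ω) (C ω)
        + (if A ω = astar then (1 : ℝ) else 0)
            / cpr p (fun ω' => A ω' = astar) (fun ω' => C ω' = C ω)
            * ((∑ a : α,
                  cex p Y (fun ω' => A ω' = a ∧ Z ω' = Z ω ∧ C ω' = C ω)
                    * cpr p (fun ω' => A ω' = a) (fun ω' => C ω' = C ω))
               - ∑ a : α, ∑ zb : ζ,
                   cex p Y (fun ω' => A ω' = a ∧ Z ω' = zb ∧ C ω' = C ω)
                     * h zb (A ω) (C ω)
                     * cpr p (fun ω' => A ω' = a) (fun ω' => C ω' = C ω))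
        + ∑ z : ζ,
            cex p Y (fun ω' => A ω' = A ω ∧ Z ω' = z ∧ C ω' = C ω)
              * h z astar (C ω))
      = (∑ ω, (p ω * Y ω) * (h (Z ω) astar (C ω) / h (Z ω) (A ω) (C ω)))
        + ∑ ω, p ω *
            (-(cex p Y (fun ω' => A ω' = A ω ∧ Z ω' = Z ω ∧ C ω' = C ω))
                * (h (Z ω) astar (C ω) / h (Z ω) (A ω) (C ω))
              + (if A ω = astar then (1 : ℝ) else 0)
                  / cpr p (fun ω' => A ω' = astar) (fun ω' => C ω' = C ω)
                  * ((∑ a : α,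
                        cex p Y (fun ω' => A ω' = a ∧ Z ω' = Z ω ∧ C ω' = C ω)
                          * cpr p (fun ω' => A ω' = a) (fun ω' => C ω' = C ω))
                     - ∑ a : α, ∑ zb : ζ,
                         cex p Y (fun ω' => A ω' = a ∧ Z ω' = zb ∧ C ω' = C ω)
                           * h zb (A ω) (C ω)
                           * cpr p (fun ω' => A ω' = a) (fun ω' => C ω' = C ω))
              + ∑ z : ζ,
                  cex p Y (fun ω' => A ω' = A ω ∧ Z ω' = z ∧ C ω' = C ω)
                    * h z astar (C ω)) := by
    rw [ex, ← Finset.sum_add_distrib]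
    exact Finset.sum_congr rfl fun ω _ => by ring
  have big : (∑ ω, (p ω * Y ω) * (h (Z ω) astar (C ω) / h (Z ω) (A ω) (C ω)))
        + (∑ ω, p ω *
            (-(cex p Y (fun ω' => A ω' = A ω ∧ Z ω' = Z ω ∧ C ω' = C ω))
                * (h (Z ω) astar (C ω) / h (Z ω) (A ω) (C ω))
              + (if A ω = astar then (1 : ℝ) else 0)
                  / cpr p (fun ω' => A ω' = astar) (fun ω' => C ω' = C ω)
                  * ((∑ a : α,
                        cex p Y (fun ω' => A ω' = a ∧ Z ω' = Z ω ∧ C ω' = C ω)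
                          * cpr p (fun ω' => A ω' = a) (fun ω' => C ω' = C ω))
                     - ∑ a : α, ∑ zb : ζ,
                         cex p Y (fun ω' => A ω' = a ∧ Z ω' = zb ∧ C ω' = C ω)
                           * h zb (A ω) (C ω)
                           * cpr p (fun ω' => A ω' = a) (fun ω' => C ω' = C ω))
              + ∑ z : ζ,
                  cex p Y (fun ω' => A ω' = A ω ∧ Z ω' = z ∧ C ω' = C ω)
                    * h z astar (C ω)))
      = (∑ c : γ, ∑ z : ζ, ∑ a : α,
            (∑ ω, if A ω = a ∧ Z ω = z ∧ C ω = c then p ω * Y ω else 0)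
              * (h z astar c / h z a c))
        + ∑ c : γ, ∑ z : ζ, ∑ a : α,
            (∑ ω, if A ω = a ∧ Z ω = z ∧ C ω = c then p ω else 0) *
              (-(cex p Y (fun ω' => A ω' = a ∧ Z ω' = z ∧ C ω' = c))
                  * (h z astar c / h z a c)
                + (if a = astar then (1 : ℝ) else 0)
                    / cpr p (fun ω' => A ω' = astar) (fun ω' => C ω' = c)
                    * ((∑ a' : α,
                          cex p Y (fun ω' => A ω' = a' ∧ Z ω' = z ∧ C ω' = c)
                            * cpr p (fun ω' => A ω' = a') (fun ω' => C ω' = c))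
                       - ∑ a' : α, ∑ zb : ζ,
                           cex p Y (fun ω' => A ω' = a' ∧ Z ω' = zb ∧ C ω' = c)
                             * h zb a c
                             * cpr p (fun ω' => A ω' = a') (fun ω' => C ω' = c))
                + ∑ z' : ζ,
                    cex p Y (fun ω' => A ω' = a ∧ Z ω' = z' ∧ C ω' = c)
                      * h z' astar c) :=
    congrArg₂ (· + ·)
      (sum_group A Z C (fun ω => p ω * Y ω) (fun a z c => h z astar c / h z a c))
      (sum_group A Z C p (fun a z c =>
        -(cex p Y (fun ω' => A ω' = a ∧ Z ω' = z ∧ C ω' = c))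
            * (h z astar c / h z a c)
          + (if a = astar then (1 : ℝ) else 0)
              / cpr p (fun ω' => A ω' = astar) (fun ω' => C ω' = c)
              * ((∑ a' : α,
                    cex p Y (fun ω' => A ω' = a' ∧ Z ω' = z ∧ C ω' = c)
                      * cpr p (fun ω' => A ω' = a') (fun ω' => C ω' = c))
                 - ∑ a' : α, ∑ zb : ζ,
                     cex p Y (fun ω' => A ω' = a' ∧ Z ω' = zb ∧ C ω' = c)
                       * h zb a c
                       * cpr p (fun ω' => A ω' = a') (fun ω' => C ω' = c))
          + ∑ z' : ζ,
              cex p Y (fun ω' => A ω' = a ∧ Z ω' = z' ∧ C ω' = c)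
                * h z' astar c))
  rw [split, big]
  simp only [hSY, hpr, cpr, hprZ]
  exact alg (fun a z c => cex p Y (fun ω => A ω = a ∧ Z ω = z ∧ C ω = c))
    (fun a z c => pr p (fun ω => A ω = a ∧ Z ω = z ∧ C ω = c))
    (fun a c => pr p (fun ω => A ω = a ∧ C ω = c))
    (fun c => pr p (fun ω => C ω = c)) h astar hP2 hPc
    (fun a c => pr_marg p A Z C a c)
end
end
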